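/- Suppose X ∈ ℝ^{n×n} is skew-symmetric and satisfies the NSARE A^T X + X A − X B_u Θ_{n_u} B_u^T X + C^T Θ_{n_y} C = 0, and let H = [[A, −B_u Θ_{n_u} B_u^T], [−C^T Θ_{n_y} C, −A^T]]. Let ω ∈ ℝ be such that iωI − A is invertible and iω is not an eigenvalue of H (as complex matrices), and set G := C(iωI − A)⁻¹B_u. Then det(Θ_{n_u} − G^† Θ_{n_y} G) is a strictly positive real number. -/
import Mathlib

open Matrix

/-- The block-diagonal matrix `diag(J, J, ..., J)` built from copies of
`J = [[0,1],[-1,0]]`, of size `m × m` (for `m` even). -/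
def Theta (m : ℕ) : Matrix (Fin m) (Fin m) ℝ :=
  Matrix.of fun i j =>
    if i.val % 2 = 0 ∧ j.val = i.val + 1 then (1 : ℝ)
    else if j.val % 2 = 0 ∧ i.val = j.val + 1 then (-1 : ℝ)
    else 0

def Jmat : Matrix (Fin 2) (Fin 2) ℝ := !![0, 1; -1, 0]

def eqv (k : ℕ) : Fin (2 * k) ≃ Fin 2 × Fin k where
  toFun i := (⟨i.val % 2, by omega⟩, ⟨i.val / 2, by omega⟩)
  invFun p := ⟨p.1.val + 2 * p.2.val, by obtain ⟨⟨a,ha⟩,⟨b,hb⟩⟩ := p; simp; omega⟩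
  left_inv i := by ext; simp; omega
  right_inv p := by obtain ⟨⟨a,ha⟩,⟨b,hb⟩⟩ := p; ext <;> simp <;> omega

lemma Jmat_mk (a b : ℕ) (ha : a < 2) (hb : b < 2) :
    Jmat ⟨a, ha⟩ ⟨b, hb⟩ = if a = 0 ∧ b = 1 then (1:ℝ) else if a = 1 ∧ b = 0 then -1 else 0 := by
  interval_cases a <;> interval_cases b <;> simp [Jmat]

lemma theta_eq (k : ℕ) :
    Theta (2 * k) = (blockDiagonal (fun _ : Fin k => Jmat)).submatrix (eqv k) (eqv k) := by
  ext i j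
  simp only [Theta, of_apply, submatrix_apply, eqv, Equiv.coe_fn_mk, blockDiagonal_apply,
    Jmat_mk, Fin.mk.injEq]
  by_cases h : (i : ℕ) / 2 = (j : ℕ) / 2 <;> simp [h] <;> split_ifs <;> first | rfl | omega

lemma Jmat_transpose : Jmatᵀ = -Jmat := by
  ext i j; fin_cases i <;> fin_cases j <;> simp [Jmat]

lemma Jmat_mul : Jmat * Jmat = -1 := by
  ext i j; fin_cases i <;> fin_cases j <;> simp [Jmat, Matrix.mul_apply, Fin.sum_univ_two]

lemma Jmat_det : Jmat.det = 1 := by simp [Jmat, Matrix.det_fin_two_of]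

lemma theta_transpose {m : ℕ} (hm : Even m) : (Theta m)ᵀ = -Theta m := by
  obtain ⟨k, hk⟩ := hm
  have : m = 2 * k := by omega
  subst this
  rw [theta_eq, transpose_submatrix, blockDiagonal_transpose]
  simp only [Jmat_transpose]
  rw [show (fun _ : Fin k => -Jmat) = -(fun _ : Fin k => Jmat) from rfl, blockDiagonal_neg]
  rfl

lemma theta_mul {m : ℕ} (hm : Even m) : Theta m * Theta m = -1 := by
  obtain ⟨k, hk⟩ := hm
  have : m = 2 * k := by omega
  subst this
  rw [theta_eq, submatrix_mul_equiv, ← blockDiagonal_mul]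
  simp only [Jmat_mul]
  rw [show (fun _ : Fin k => (-1 : Matrix (Fin 2) (Fin 2) ℝ)) = -(fun _ : Fin k => 1) from rfl,
    blockDiagonal_neg]
  have h1 : (blockDiagonal fun _ : Fin k => (1 : Matrix (Fin 2) (Fin 2) ℝ)) = 1 :=
    blockDiagonal_one
  rw [h1]
  ext i j
  simp [submatrix_apply, one_apply, Equiv.injective (eqv k) |>.eq_iff]

lemma theta_det {m : ℕ} (hm : Even m) : (Theta m).det = 1 := by
  obtain ⟨k, hk⟩ := hm
  have : m = 2 * k := by omega
  subst this
  rw [theta_eq, det_submatrix_equiv_self, det_blockDiagonal]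
  simp [Jmat_det]

lemma ctMap {p q : Type*} (M : Matrix p q ℝ) :
    (M.map Complex.ofReal)ᴴ = (M.map Complex.ofReal)ᵀ := by
  ext i j; simp [conjTranspose_apply, Complex.conj_ofReal]

lemma rmap_mul {p q r : Type*} [Fintype q] (M : Matrix p q ℝ) (N : Matrix q r ℝ) :
    (M * N).map Complex.ofReal = M.map Complex.ofReal * N.map Complex.ofReal :=
  Matrix.map_mul (f := Complex.ofRealHom)

lemma rmap_add {p q : Type*} (M N : Matrix p q ℝ) :
    (M + N).map Complex.ofReal = M.map Complex.ofReal + N.map Complex.ofReal := by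
  ext i j; simp

lemma rmap_sub {p q : Type*} (M N : Matrix p q ℝ) :
    (M - N).map Complex.ofReal = M.map Complex.ofReal - N.map Complex.ofReal := by
  ext i j; simp

lemma rmap_neg {p q : Type*} (M : Matrix p q ℝ) :
    (-M).map Complex.ofReal = -(M.map Complex.ofReal) := by
  ext i j; simp

lemma rmap_zero {p q : Type*} :
    ((0 : Matrix p q ℝ)).map Complex.ofReal = 0 := by
  ext i j; simp

lemma rmap_one {p : Type*} [DecidableEq p] :
    ((1 : Matrix p p ℝ)).map Complex.ofReal = 1 := by
  ext i j
  by_cases h : i = j <;> simp [one_apply, h]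

lemma factor {n u : Type*} [Fintype n] [Fintype u] [DecidableEq n] [DecidableEq u]
    (S Φ X R : Matrix n n ℂ) (B : Matrix n u ℂ) (Θu : Matrix u u ℂ)
    (hS1 : S * Φ = 1) (hX : Xᴴ = -X)
    (hΘH : Θuᴴ = -Θu) (hΘ2 : Θu * Θu = -1)
    (hR : R = Sᴴ * X + X * S + X * (B * (Θu * (Bᴴ * X)))) :
    Θu - Bᴴ * (Φᴴ * (R * (Φ * B))) =
      (1 + Θu * (Bᴴ * (X * (Φ * B))))ᴴ * (Θu * (1 + Θu * (Bᴴ * (X * (Φ * B))))) := by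
  have e1 : ∀ (M : Matrix n u ℂ), Φᴴ * (Sᴴ * M) = M := by
    intro M
    rw [← Matrix.mul_assoc, ← conjTranspose_mul, hS1, conjTranspose_one, Matrix.one_mul]
  have e2 : S * (Φ * B) = B := by rw [← Matrix.mul_assoc, hS1, Matrix.one_mul]
  have e3 : ∀ (M : Matrix u u ℂ), Θu * (Θu * M) = -M := by
    intro M
    rw [← Matrix.mul_assoc, hΘ2, Matrix.neg_mul, Matrix.one_mul]
  subst hR
  simp only [conjTranspose_mul, conjTranspose_add, conjTranspose_one, conjTranspose_conjTranspose,
    hX, hΘH, hΘ2, Matrix.mul_add, Matrix.add_mul, Matrix.mul_one, Matrix.one_mul,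
    Matrix.mul_neg, Matrix.neg_mul, Matrix.mul_assoc, e1, e2, e3]
  abel
theorem stmt_13 (n nu ny : ℕ) (hn : Even n) (hn0 : 0 < n)
    (hnu : Even nu) (hnu0 : 0 < nu) (hny : Even ny) (hny0 : 0 < ny)
    (A : Matrix (Fin n) (Fin n) ℝ) (Bu : Matrix (Fin n) (Fin nu) ℝ)
    (C : Matrix (Fin ny) (Fin n) ℝ)
    (X : Matrix (Fin n) (Fin n) ℝ) (hXskew : Xᵀ = -X)
    (hX : Aᵀ * X + X * A - X * Bu * Theta nu * Buᵀ * X + Cᵀ * Theta ny * C = 0)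
    (H : Matrix (Fin n ⊕ Fin n) (Fin n ⊕ Fin n) ℝ)
    (hH : H = Matrix.fromBlocks A (-(Bu * Theta nu * Buᵀ))
      (-(Cᵀ * Theta ny * C)) (-Aᵀ))
    (ω : ℝ)
    (Ac : Matrix (Fin n) (Fin n) ℂ) (hAc : Ac = A.map Complex.ofReal)
    (Buc : Matrix (Fin n) (Fin nu) ℂ) (hBuc : Buc = Bu.map Complex.ofReal)
    (Cc : Matrix (Fin ny) (Fin n) ℂ) (hCc : Cc = C.map Complex.ofReal)
    (hs : IsUnit ((Complex.I * ω) • (1 : Matrix (Fin n) (Fin n) ℂ) - Ac).det)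
    (hωH : (Complex.I * ω) ∉ spectrum ℂ (H.map Complex.ofReal))
    (G : Matrix (Fin ny) (Fin nu) ℂ)
    (hG : G = Cc * ((Complex.I * ω) • 1 - Ac)⁻¹ * Buc) :
    ∃ r : ℝ, 0 < r ∧
      ((Theta nu).map Complex.ofReal - Gᴴ * (Theta ny).map Complex.ofReal * G).det = r := by
  subst hH
  set s : ℂ := Complex.I * ω with hs_def
  set Θu : Matrix (Fin nu) (Fin nu) ℂ := (Theta nu).map Complex.ofReal with hΘu_def
  set Θy : Matrix (Fin ny) (Fin ny) ℂ := (Theta ny).map Complex.ofReal with hΘy_def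
  set Xc : Matrix (Fin n) (Fin n) ℂ := X.map Complex.ofReal with hXc_def
  set S : Matrix (Fin n) (Fin n) ℂ := s • 1 - Ac with hS_def
  -- basic facts
  have hΘuH : Θuᴴ = -Θu := by
    rw [hΘu_def, ctMap, ← transpose_map, theta_transpose hnu, rmap_neg]
  have hΘu2 : Θu * Θu = -1 := by
    rw [hΘu_def, ← rmap_mul, theta_mul hnu, rmap_neg, rmap_one]
  have hXcH : Xcᴴ = -Xc := by
    rw [hXc_def, ctMap, ← transpose_map, hXskew, rmap_neg]
  have hS1 : S * S⁻¹ = 1 := mul_nonsing_inv _ hs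
  have hS2 : S⁻¹ * S = 1 := nonsing_inv_mul _ hs
  have hstar_s : star s = -s := by
    rw [hs_def]
    simp [Complex.star_def, _root_.map_mul, Complex.conj_I, Complex.conj_ofReal]
  have hSH : Sᴴ = (-s) • 1 - Acᴴ := by
    rw [hS_def, conjTranspose_sub, conjTranspose_smul, conjTranspose_one, hstar_s]
  -- complexified Riccati equation
  have hXC : Acᴴ * Xc + Xc * Ac - Xc * (Buc * (Θu * (Bucᴴ * Xc))) + Ccᴴ * (Θy * Cc) = 0 := by
    have h0 := congrArg (fun M => Matrix.map M Complex.ofReal) hX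
    simp only [rmap_mul, rmap_add, rmap_sub, rmap_zero, Matrix.transpose_map] at h0
    simp only [← ctMap] at h0
    simp only [← hAc, ← hBuc, ← hCc, ← hXc_def, ← hΘu_def, ← hΘy_def, Matrix.mul_assoc] at h0
    exact h0
  have e1 : Sᴴ * Xc + Xc * S = -(Acᴴ * Xc) - Xc * Ac := by
    rw [hSH, hS_def]
    simp only [Matrix.sub_mul, Matrix.mul_sub, smul_mul_assoc, mul_smul_comm,
      Matrix.one_mul, Matrix.mul_one, neg_smul, Matrix.neg_mul]
    abel
  have hCC : Ccᴴ * (Θy * Cc) = Sᴴ * Xc + Xc * S + Xc * (Buc * (Θu * (Bucᴴ * Xc))) := by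
    rw [e1]
    calc Ccᴴ * (Θy * Cc)
        = (Acᴴ * Xc + Xc * Ac - Xc * (Buc * (Θu * (Bucᴴ * Xc))) + Ccᴴ * (Θy * Cc))
            - (Acᴴ * Xc) - Xc * Ac + Xc * (Buc * (Θu * (Bucᴴ * Xc))) := by abel
      _ = -(Acᴴ * Xc) - Xc * Ac + Xc * (Buc * (Θu * (Bucᴴ * Xc))) := by rw [hXC]; abel
  -- the factorization
  have hfac := factor S S⁻¹ Xc (Ccᴴ * (Θy * Cc)) Buc Θu hS1 hXcH hΘuH hΘu2 hCC
  set M : Matrix (Fin nu) (Fin nu) ℂ := 1 + Θu * (Bucᴴ * (Xc * (S⁻¹ * Buc))) with hM_def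
  have hGG : Θu - Gᴴ * Θy * G = Mᴴ * (Θu * M) := by
    rw [hG, ← hfac]
    simp only [conjTranspose_mul, Matrix.mul_assoc]
  -- determinant of M is nonzero
  -- step 1: reduce to the closed-loop matrix
  have hMswap : M.det = (1 + Buc * (Θu * (Bucᴴ * (Xc * S⁻¹)))).det := by
    rw [show M = 1 + (Θu * (Bucᴴ * (Xc * S⁻¹))) * Buc from by
      rw [hM_def]; simp only [Matrix.mul_assoc]]
    exact det_one_add_mul_comm _ _
  set Acl : Matrix (Fin n) (Fin n) ℂ := Ac - Buc * (Θu * (Bucᴴ * Xc)) with hAcl_def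
  have hMfac : M.det = (s • 1 - Acl).det * S⁻¹.det := by
    rw [hMswap]
    have h1 : s • (1 : Matrix (Fin n) (Fin n) ℂ) - Acl = S + Buc * (Θu * (Bucᴴ * Xc)) := by
      rw [hAcl_def, hS_def]; abel
    have h2 : (1 : Matrix (Fin n) (Fin n) ℂ) + Buc * (Θu * (Bucᴴ * (Xc * S⁻¹)))
        = (s • 1 - Acl) * S⁻¹ := by
      rw [h1, Matrix.add_mul, hS1]
      simp only [Matrix.mul_assoc]
    rw [h2, det_mul]
  have hSinvdet : S⁻¹.det ≠ 0 := by
    rw [det_nonsing_inv, Ring.inverse_eq_inv']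
    exact inv_ne_zero hs.ne_zero
  -- step 2: iω is not an eigenvalue of the closed loop matrix
  have hAcH : Acᴴ = Acᵀ := by rw [hAc, ctMap]
  have hBucH : Bucᴴ = Bucᵀ := by rw [hBuc, ctMap]
  have hCcH : Ccᴴ = Ccᵀ := by rw [hCc, ctMap]
  have hHc : (fromBlocks A (-(Bu * Theta nu * Buᵀ)) (-(Cᵀ * Theta ny * C)) (-Aᵀ)).map
      Complex.ofReal
      = fromBlocks Ac (-(Buc * (Θu * Bucᴴ))) (-(Ccᴴ * (Θy * Cc))) (-Acᴴ) := by
    rw [fromBlocks_map]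
    simp only [rmap_neg, rmap_mul, Matrix.transpose_map, hAcH, hBucH, hCcH,
      ← hAc, ← hBuc, ← hCc, ← hΘu_def, ← hΘy_def, Matrix.mul_assoc]
  have hunit : IsUnit (s • (1 : Matrix (Fin n ⊕ Fin n) (Fin n ⊕ Fin n) ℂ)
      - fromBlocks Ac (-(Buc * (Θu * Bucᴴ))) (-(Ccᴴ * (Θy * Cc))) (-Acᴴ)) := by
    rw [← hHc, ← Algebra.algebraMap_eq_smul_one]
    exact spectrum.notMem_iff.mp hωH
  have hdetH : (s • (1 : Matrix (Fin n ⊕ Fin n) (Fin n ⊕ Fin n) ℂ)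
      - fromBlocks Ac (-(Buc * (Θu * Bucᴴ))) (-(Ccᴴ * (Θy * Cc))) (-Acᴴ)).det ≠ 0 :=
    ((isUnit_iff_isUnit_det _).mp hunit).ne_zero
  set T : Matrix (Fin n ⊕ Fin n) (Fin n ⊕ Fin n) ℂ := fromBlocks 1 0 Xc 1 with hT_def
  set T' : Matrix (Fin n ⊕ Fin n) (Fin n ⊕ Fin n) ℂ := fromBlocks 1 0 (-Xc) 1 with hT'_def
  have hTdet : T.det = 1 := by
    rw [hT_def, det_fromBlocks_zero₁₂, det_one, one_mul]
  have hT'det : T'.det = 1 := by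
    rw [hT'_def, det_fromBlocks_zero₁₂, det_one, one_mul]
  have hblocks : s • (1 : Matrix (Fin n ⊕ Fin n) (Fin n ⊕ Fin n) ℂ)
      - fromBlocks Ac (-(Buc * (Θu * Bucᴴ))) (-(Ccᴴ * (Θy * Cc))) (-Acᴴ)
      = fromBlocks (s • 1 - Ac) (Buc * (Θu * Bucᴴ)) (Ccᴴ * (Θy * Cc)) (s • 1 + Acᴴ) := by
    rw [← fromBlocks_one, fromBlocks_smul, sub_eq_add_neg, fromBlocks_neg, fromBlocks_add]
    simp only [smul_zero, neg_neg, add_zero, zero_add]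
    rw [← sub_eq_add_neg]
  have hsim : T' * ((fromBlocks (s • 1 - Ac) (Buc * (Θu * Bucᴴ)) (Ccᴴ * (Θy * Cc))
      (s • 1 + Acᴴ)) * T)
      = fromBlocks (s • 1 - Acl) (Buc * (Θu * Bucᴴ)) 0
          (s • 1 + Acᴴ - Xc * (Buc * (Θu * Bucᴴ))) := by
    rw [hT_def, hT'_def, fromBlocks_multiply, fromBlocks_multiply, Matrix.fromBlocks_inj]
    refine ⟨?_, ?_, ?_, ?_⟩
    · rw [hAcl_def]
      simp only [Matrix.mul_one, Matrix.mul_zero, Matrix.zero_mul, add_zero, zero_add,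
        Matrix.one_mul, Matrix.mul_assoc]
      abel
    · simp only [Matrix.mul_zero, Matrix.mul_one, Matrix.zero_mul, zero_add, add_zero,
        Matrix.one_mul]
    · -- lower-left block is zero by the Riccati equation
      simp only [Matrix.mul_one, Matrix.mul_zero, Matrix.zero_mul, add_zero, zero_add,
        Matrix.neg_mul, Matrix.one_mul, Matrix.mul_sub, Matrix.mul_add, Matrix.sub_mul,
        Matrix.add_mul, mul_smul_comm, smul_mul_assoc, Matrix.mul_one, smul_neg, neg_smul,
        Matrix.mul_assoc]
      rw [← hXC]
      abel
    · simp only [Matrix.mul_zero, Matrix.mul_one, Matrix.zero_mul, zero_add, add_zero,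
        Matrix.one_mul, Matrix.neg_mul]
      abel
  have hdetAcl : (s • (1 : Matrix (Fin n) (Fin n) ℂ) - Acl).det ≠ 0 := by
    have d1 : (T' * ((fromBlocks (s • 1 - Ac) (Buc * (Θu * Bucᴴ)) (Ccᴴ * (Θy * Cc))
        (s • 1 + Acᴴ)) * T)).det
        = (s • (1 : Matrix (Fin n ⊕ Fin n) (Fin n ⊕ Fin n) ℂ)
          - fromBlocks Ac (-(Buc * (Θu * Bucᴴ))) (-(Ccᴴ * (Θy * Cc))) (-Acᴴ)).det := by
      rw [det_mul, det_mul, hT'det, hTdet, one_mul, mul_one, hblocks]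
    rw [hsim, det_fromBlocks_zero₂₁] at d1
    intro h
    rw [h, zero_mul] at d1
    exact hdetH d1.symm
  have hdetM : M.det ≠ 0 := by
    rw [hMfac]
    exact mul_ne_zero hdetAcl hSinvdet
  -- conclusion
  have hdetΘu : Θu.det = 1 := by
    rw [hΘu_def]
    rw [show (Theta nu).map Complex.ofReal = Complex.ofRealHom.mapMatrix (Theta nu) from rfl]
    rw [← RingHom.map_det, theta_det hnu, _root_.map_one]
  refine ⟨Complex.normSq M.det, Complex.normSq_pos.mpr hdetM, ?_⟩
  rw [hGG, det_mul, det_mul, det_conjTranspose, hdetΘu, one_mul, Complex.star_def]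
  exact (Complex.normSq_eq_conj_mul_self).symm
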